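/- For every n ∈ ℕ, the set of values { μ_ℰ(X) : X indecomposable, l_ℰ(X) ≤ n } is finite. -/

import Mathlib

open CategoryTheory CategoryTheory.Limits

universe v u

variable {C : Type u} [Category.{v} C] [Preadditive C]

/-- A kernel-cokernel pair: `S.f` is a kernel of `S.g` and `S.g` is a cokernel of `S.f`. -/
structure IsKernelCokernelPair (S : ShortComplex C) : Prop where
  isKernel : Nonempty (IsLimit (KernelFork.ofι S.f S.zero))
  isCokernel : Nonempty (IsColimit (CokernelCofork.ofπ S.g S.zero))

/-- `i` is an admissible monic for the class `E`. -/
def AdmissibleMono (E : Set (ShortComplex C)) {A B : C} (i : A ⟶ B) : Prop :=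
  ∃ (Z : C) (d : B ⟶ Z) (w : i ≫ d = 0), ShortComplex.mk i d w ∈ E

/-- `d` is an admissible epic for the class `E`. -/
def AdmissibleEpi (E : Set (ShortComplex C)) {B Z : C} (d : B ⟶ Z) : Prop :=
  ∃ (A : C) (i : A ⟶ B) (w : i ≫ d = 0), ShortComplex.mk i d w ∈ E

/-- Quillen's axioms for an exact structure on an additive category. -/
structure IsExactStructure (E : Set (ShortComplex C)) : Prop where
  kcp : ∀ S ∈ E, IsKernelCokernelPair S
  iso_closed : ∀ S T : ShortComplex C, S ∈ E → Nonempty (S ≅ T) → T ∈ E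
  id_mono : ∀ A : C, AdmissibleMono E (𝟙 A)
  id_epi : ∀ A : C, AdmissibleEpi E (𝟙 A)
  mono_comp : ∀ {A B D : C} (i : A ⟶ B) (j : B ⟶ D),
    AdmissibleMono E i → AdmissibleMono E j → AdmissibleMono E (i ≫ j)
  epi_comp : ∀ {A B D : C} (p : A ⟶ B) (q : B ⟶ D),
    AdmissibleEpi E p → AdmissibleEpi E q → AdmissibleEpi E (p ≫ q)
  pushout : ∀ {A B X : C} (i : A ⟶ B) (t : A ⟶ X), AdmissibleMono E i →
    ∃ (P : C) (sB : B ⟶ P) (sX : X ⟶ P), IsPushout i t sB sX ∧ AdmissibleMono E sX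
  pullback : ∀ {B X Y : C} (d : B ⟶ X) (t : Y ⟶ X), AdmissibleEpi E d →
    ∃ (P : C) (pB : P ⟶ B) (pY : P ⟶ Y), IsPullback pB pY d t ∧ AdmissibleEpi E pY

/-- The class of split short exact sequences: those isomorphic to
`A → A ⊞ B → B` with the canonical inclusion and projection. -/
def splitClass (C : Type u) [Category.{v} C] [Preadditive C] [HasBinaryBiproducts C] :
    Set (ShortComplex C) :=
  { S | ∃ (A B : C), Nonempty (S ≅ ShortComplex.mk (biprod.inl : A ⟶ A ⊞ B)
      (biprod.snd : A ⊞ B ⟶ B) (by simp)) }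

/-- `X` is an `ℰ`-subobject of `Y`: there is an admissible monic `X ↣ Y`. -/
def ESubobject (E : Set (ShortComplex C)) (X Y : C) : Prop :=
  ∃ i : X ⟶ Y, AdmissibleMono E i

/-- There is a chain `0 = X₀ ↣ X₁ ↣ ⋯ ↣ Xₙ = X` of admissible monics that are
not isomorphisms. -/
def HasChainOfLength (E : Set (ShortComplex C)) (X : C) (n : ℕ) : Prop :=
  ∃ (obj : Fin (n + 1) → C) (f : ∀ i : Fin n, obj i.castSucc ⟶ obj i.succ),
    IsZero (obj 0) ∧ obj (Fin.last n) = X ∧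
    ∀ i : Fin n, AdmissibleMono E (f i) ∧ ¬ IsIso (f i)

/-- The `ℰ`-length of `X`: the supremum of the lengths of chains of proper
admissible monics ending in `X`. -/
noncomputable def eLength (E : Set (ShortComplex C)) (X : C) : ℕ∞ :=
  sSup { n : ℕ∞ | ∃ m : ℕ, HasChainOfLength E X m ∧ n = (m : ℕ∞) }

/-- `X` is a proper `ℰ`-subobject of `Y`: there is an admissible monic `X ↣ Y`
that is not an isomorphism. -/
def ProperESub (E : Set (ShortComplex C)) (X Y : C) : Prop :=
  ∃ i : X ⟶ Y, AdmissibleMono E i ∧ ¬ IsIso i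

/-- An object is indecomposable if it is nonzero and in any direct sum
decomposition one of the summands is zero. -/
def Indecomposable' [HasBinaryBiproducts C] (X : C) : Prop :=
  ¬ IsZero X ∧ ∀ A B : C, Nonempty (X ≅ A ⊞ B) → IsZero A ∨ IsZero B

/-- The Gabriel-Roiter order `⋘` on finite sequences of natural numbers:
lexicographic with the order on `ℕ` reversed, where a prefix is smaller. -/
def grLE : List ℕ → List ℕ → Prop
  | [], _ => True
  | _ :: _, [] => False
  | a :: x, b :: y => b < a ∨ (a = b ∧ grLE x y)

/-- The set of length vectors `(l_ℰ(X₁), …, l_ℰ(Xₙ))` of chains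
`X₁ ⊊_ℰ ⋯ ⊊_ℰ Xₙ = X` of indecomposable proper `ℰ`-subobjects ending in `X`. -/
def grVectors [HasBinaryBiproducts C] (E : Set (ShortComplex C)) (X : C) :
    Set (List ℕ) :=
  { l | ∃ (n : ℕ) (obj : Fin (n + 1) → C),
      (∀ i, Indecomposable' (obj i)) ∧ obj (Fin.last n) = X ∧
      (∀ i : Fin n, ProperESub E (obj i.castSucc) (obj i.succ)) ∧
      l = List.ofFn (fun i : Fin (n + 1) => (eLength E (obj i)).toNat) }

/-- `μ` is a Gabriel-Roiter measure: it sends each indecomposable `X` to the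
maximal length vector, in the Gabriel-Roiter order, over all chains of
indecomposable proper `ℰ`-subobjects ending in `X`. -/
def IsGRMeasure [HasBinaryBiproducts C] (E : Set (ShortComplex C))
    (μ : C → List ℕ) : Prop :=
  ∀ X : C, Indecomposable' X →
    μ X ∈ grVectors E X ∧ ∀ v ∈ grVectors E X, grLE v (μ X)

/-! Along a chain `X₁ ⊊ ⋯ ⊊ Xₘ = X` of proper admissible subobjects, every chain
ending in `Xᵢ` extends by one step to `Xᵢ₊₁`, so `l(Xᵢ) + 1 ≤ l(Xᵢ₊₁)`. Hence `μ(X)` is strictly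
increasing with entries at most `l(X) ≤ n`, i.e. a sublist of `[0, …, n]`, and there are only
finitely many of those. -/

omit [Preadditive C] in
lemma eqToHom_comp_comp_eqToHom_iff (P : ∀ {A B : C}, (A ⟶ B) → Prop) {A A' B B' : C}
    (e : A' = A) (e' : B = B') (g : A ⟶ B) : P (eqToHom e ≫ g ≫ eqToHom e') ↔ P g := by
  subst e e'
  simp

namespace IsExactStructure

variable {E : Set (ShortComplex C)}

/-- The kernel of the admissible epic `𝟙 A` is a zero admissible subobject of `A`. -/
lemma exists_isZero_admissibleMono (hE : IsExactStructure E) (A : C) :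
    ∃ (Z : C) (z : Z ⟶ A), IsZero Z ∧ AdmissibleMono E z := by
  obtain ⟨Z, z, w, hS⟩ := hE.id_epi A
  obtain ⟨hker⟩ := (hE.kcp _ hS).isKernel
  refine ⟨Z, z, ?_, A, 𝟙 A, w, hS⟩
  rw [IsZero.iff_id_eq_zero]
  exact Fork.IsLimit.hom_ext hker (by simpa using w)

end IsExactStructure

lemma hasChainOfLength_zero (E : Set (ShortComplex C)) {Z : C} (hZ : IsZero Z) :
    HasChainOfLength E Z 0 :=
  ⟨fun _ => Z, Fin.elim0, hZ, rfl, fun i => i.elim0⟩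

lemma HasChainOfLength.snoc {E : Set (ShortComplex C)} {A B : C} {m : ℕ}
    (h : HasChainOfLength E A m) (hAB : ProperESub E A B) : HasChainOfLength E B (m + 1) := by
  obtain ⟨obj, f, h0, rfl, hf⟩ := h
  obtain ⟨i, hi, hni⟩ := hAB
  refine ⟨Fin.snoc obj B, fun j => Fin.lastCases
      (eqToHom (by simp) ≫ i ≫ eqToHom (by simp [Fin.succ_last]))
      (fun j => eqToHom (by simp) ≫ f j ≫
        eqToHom (by simp [Fin.succ_castSucc, -Fin.castSucc_succ])) j,
    ?_, by simp, fun j => ?_⟩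
  · rwa [← Fin.castSucc_zero, Fin.snoc_castSucc]
  induction j using Fin.lastCases with
  | last =>
    simpa only [Fin.lastCases_last, eqToHom_comp_comp_eqToHom_iff (AdmissibleMono E),
      eqToHom_comp_comp_eqToHom_iff IsIso] using ⟨hi, hni⟩
  | cast j =>
    simpa only [Fin.lastCases_castSucc, eqToHom_comp_comp_eqToHom_iff (AdmissibleMono E),
      eqToHom_comp_comp_eqToHom_iff IsIso] using hf j

lemma hasChainOfLength_one {E : Set (ShortComplex C)} (hE : IsExactStructure E) {X : C}
    (hX : ¬ IsZero X) : HasChainOfLength E X 1 := by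
  obtain ⟨Z, z, hZ, hz⟩ := hE.exists_isZero_admissibleMono X
  refine (hasChainOfLength_zero E hZ).snoc ⟨z, hz, fun _ => hX ?_⟩
  exact hZ.of_iso (asIso z).symm

lemma eLength_add_one_le {E : Set (ShortComplex C)} (hE : IsExactStructure E) {A B : C}
    (hA : ¬ IsZero A) (hAB : ProperESub E A B) : eLength E A + 1 ≤ eLength E B := by
  have hne : { n : ℕ∞ | ∃ m : ℕ, HasChainOfLength E A m ∧ n = m }.Nonempty :=
    ⟨1, 1, hasChainOfLength_one hE hA, by simp⟩
  rw [eLength, ENat.sSup_add hne]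
  exact iSup₂_le fun _ ⟨m, hm, hn⟩ => hn ▸ le_sSup ⟨m + 1, hm.snoc hAB, by simp⟩

lemma Fin.le_of_add_one_le_succ {N : ℕ} {s : Fin (N + 1) → ℕ∞}
    (hs : ∀ i : Fin N, s i.castSucc + 1 ≤ s i.succ) {n : ℕ∞} (hlast : s (Fin.last N) ≤ n)
    (i : Fin (N + 1)) : s i ≤ n := by
  have hmono : Monotone s :=
    Fin.monotone_iff_le_succ.mpr fun i => le_self_add.trans (hs i)
  exact (hmono (Fin.le_last i)).trans hlast

lemma Fin.strictMono_toNat_of_add_one_le_succ {N : ℕ} {s : Fin (N + 1) → ℕ∞}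
    (hs : ∀ i : Fin N, s i.castSucc + 1 ≤ s i.succ) (hfin : ∀ i, s i ≠ ⊤) :
    StrictMono fun i => (s i).toNat := by
  refine Fin.strictMono_iff_lt_succ.mpr fun i => ?_
  have hlt := (ENat.add_one_le_iff (hfin _)).mp (hs i)
  rwa [← ENat.natCast_toNat (hfin i.castSucc), ← ENat.natCast_toNat (hfin i.succ),
    Nat.cast_lt] at hlt

/-- Such a list is a sublist of `[0, …, n]`. -/
lemma List.finite_setOf_sortedLT_le (n : ℕ) :
    { l : List ℕ | l.SortedLT ∧ ∀ x ∈ l, x ≤ n }.Finite := by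
  refine (List.range (n + 1)).sublists.toFinset.finite_toSet.subset fun l ⟨hl, hle⟩ => ?_
  have hsub : l.Subperm (List.range (n + 1)) :=
    List.subperm_of_subset hl.nodup fun x hx => List.mem_range.mpr (Nat.lt_succ_of_le (hle x hx))
  simpa using List.sublist_of_subperm_of_pairwise hsub hl.pairwise List.pairwise_lt_range

theorem grMeasure_values_finite_general [HasBinaryBiproducts C]
    (E : Set (ShortComplex C)) (hE : IsExactStructure E)
    (μ : C → List ℕ) (hμ : IsGRMeasure E μ) (n : ℕ) :
    Set.Finite { v : List ℕ | ∃ X : C, Indecomposable' X ∧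
      eLength E X ≤ (n : ℕ∞) ∧ v = μ X } := by
  refine (List.finite_setOf_sortedLT_le n).subset ?_
  rintro _ ⟨X, hX, hXn, rfl⟩
  obtain ⟨N, obj, hind, rfl, hsub, hμX⟩ := (hμ X hX).1
  have hstep : ∀ i : Fin N, eLength E (obj i.castSucc) + 1 ≤ eLength E (obj i.succ) :=
    fun i => eLength_add_one_le hE (hind _).1 (hsub i)
  have hle := Fin.le_of_add_one_le_succ (s := fun i => eLength E (obj i)) hstep hXn
  rw [hμX]
  refine ⟨(Fin.strictMono_toNat_of_add_one_le_succ hstep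
    fun i => ne_top_of_le_ne_top (ENat.natCast_ne_top n) (hle i)).sortedLT_ofFn, ?_⟩
  exact List.forall_mem_ofFn_iff.mpr fun i => ENat.toNat_le_of_le_natCast (hle i)

/-- (GR₅): for every `n`, the set of values of the Gabriel-Roiter measure on
indecomposables of `ℰ`-length at most `n` is finite. -/
theorem grMeasure_values_finite [HasBinaryBiproducts C] [EssentiallySmall.{v} C]
    (E : Set (ShortComplex C)) (hE : IsExactStructure E)
    (hfin : ∀ W : C, eLength E W ≠ ⊤)
    (μ : C → List ℕ) (hμ : IsGRMeasure E μ) (n : ℕ) :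
    Set.Finite { v : List ℕ | ∃ X : C, Indecomposable' X ∧
      eLength E X ≤ (n : ℕ∞) ∧ v = μ X } :=
  grMeasure_values_finite_general E hE μ hμ n
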